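/- For fixed j ≥ 1 and γ > 0, as n → ∞ the Jacobi-Stirling number satisfies {n brace j}_γ ~ (Γ(j+2γ-1)/(j! Γ(2j+2γ-1))) (j(j+2γ-1))^n, i.e., the ratio of the two sides tends to 1. -/
import Mathlib


noncomputable def JS (γ : ℝ) : ℕ → ℕ → ℝ
  | 0, 0 => 1
  | 0, _ + 1 => 0
  | _ + 1, 0 => 0
  | n + 1, j + 1 => JS γ n j + ((j:ℝ) + 1) * (((j:ℝ) + 1) + 2 * γ - 1) * JS γ n (j + 1)

open Finset Polynomial Filter

/-- The eigenvalues `r (r + 2γ - 1)`. -/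
noncomputable def lamJS (γ : ℝ) (r : ℕ) : ℝ := (r : ℝ) * ((r : ℝ) + 2 * γ - 1)

lemma lamJS_zero (γ : ℝ) : lamJS γ 0 = 0 := by simp [lamJS]

lemma lamJS_strictMono {γ : ℝ} (hγ : 0 < γ) : StrictMono (lamJS γ) := by
  apply strictMono_nat_of_lt_succ
  intro n
  have : (0:ℝ) ≤ (n:ℝ) := Nat.cast_nonneg n
  simp only [lamJS]
  push_cast
  nlinarith

lemma lamJS_nonneg {γ : ℝ} (hγ : 0 < γ) (r : ℕ) : 0 ≤ lamJS γ r := by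
  simpa [lamJS_zero] using (lamJS_strictMono hγ).monotone (Nat.zero_le r)

/-- Lagrange-type coefficients. -/
noncomputable def BcJS (γ : ℝ) (j r : ℕ) : ℝ :=
  ∏ s ∈ (Finset.range (j+1)).erase r, (lamJS γ r - lamJS γ s)⁻¹

lemma leadingCoeff_lagrange_basis {F : Type*} [Field F] {ι : Type*} [DecidableEq ι]
    {s : Finset ι} {v : ι → F} (hvs : Set.InjOn v s) {i : ι} (hi : i ∈ s) :
    (Lagrange.basis s v i).leadingCoeff = ∏ j ∈ s.erase i, (v i - v j)⁻¹ := by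
  rw [Lagrange.basis, Polynomial.leadingCoeff_prod]
  refine Finset.prod_congr rfl fun j hj => ?_
  obtain ⟨hij, hjs⟩ := Finset.mem_erase.mp hj
  rw [Lagrange.basisDivisor, leadingCoeff_mul, leadingCoeff_C,
    (monic_X_sub_C (v j)).leadingCoeff, mul_one]

lemma sumBcJS {γ : ℝ} (hγ : 0 < γ) {j : ℕ} (hj : 1 ≤ j) :
    ∑ r ∈ Finset.range (j+1), BcJS γ j r = 0 := by
  have hvs : Set.InjOn (lamJS γ) (Finset.range (j+1)) :=
    (lamJS_strictMono hγ).injective.injOn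
  have h := Lagrange.sum_basis hvs ⟨0, by simp⟩
  have h2 := congrArg (fun p => Polynomial.coeff p j) h
  rw [Polynomial.finset_sum_coeff, Polynomial.coeff_one] at h2
  have key : ∀ r ∈ Finset.range (j+1),
      (Lagrange.basis (Finset.range (j+1)) (lamJS γ) r).coeff j = BcJS γ j r := by
    intro r hr
    have hd : (Lagrange.basis (Finset.range (j+1)) (lamJS γ) r).natDegree = j := by
      rw [Lagrange.natDegree_basis hvs hr, Finset.card_range]
      omega
    have hcn := Polynomial.coeff_natDegree
      (p := Lagrange.basis (Finset.range (j+1)) (lamJS γ) r)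
    rw [hd] at hcn
    rw [hcn, leadingCoeff_lagrange_basis hvs hr, BcJS]
  rw [Finset.sum_congr rfl key, if_neg (by omega : ¬ j = 0)] at h2
  exact h2

lemma BcJS_succ {γ : ℝ} (hγ : 0 < γ) {j r : ℕ} (hr : r ∈ Finset.range (j+1)) :
    BcJS γ (j+1) r * (lamJS γ r - lamJS γ (j+1)) = BcJS γ j r := by
  have hrne : r ≠ j + 1 := by
    have := Finset.mem_range.mp hr; omega
  have hne : lamJS γ r - lamJS γ (j+1) ≠ 0 := by
    have := (lamJS_strictMono hγ).injective.ne hrne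
    exact sub_ne_zero.mpr this
  have hset : (Finset.range (j+2)).erase r
      = insert (j+1) ((Finset.range (j+1)).erase r) := by
    rw [Finset.range_add_one, Finset.erase_insert_of_ne hrne.symm]
  have hnotmem : (j+1) ∉ (Finset.range (j+1)).erase r := by
    simp
  rw [BcJS, hset, Finset.prod_insert hnotmem, ← BcJS]
  field_simp

lemma JS_closed_form {γ : ℝ} (hγ : 0 < γ) :
    ∀ n j, JS γ n j = ∑ r ∈ Finset.range (j+1), BcJS γ j r * (lamJS γ r) ^ n := by
  intro n
  induction n with
  | zero =>
    intro j
    cases j with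
    | zero => simp [JS, BcJS]
    | succ j =>
      simp only [pow_zero, mul_one]
      rw [show JS γ 0 (j+1) = 0 from rfl]
      exact (sumBcJS hγ (Nat.succ_le_succ (Nat.zero_le j))).symm
  | succ n ih =>
    intro j
    cases j with
    | zero => simp [JS, BcJS, lamJS_zero]
    | succ j =>
      have hrec : JS γ (n+1) (j+1)
          = JS γ n j + ((j:ℝ) + 1) * (((j:ℝ) + 1) + 2 * γ - 1) * JS γ n (j+1) := rfl
      have hc : ((j:ℝ) + 1) * (((j:ℝ) + 1) + 2 * γ - 1) = lamJS γ (j+1) := by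
        simp only [lamJS]; push_cast; ring
      rw [hrec, hc, ih j, ih (j+1)]
      have eq1 : ∑ r ∈ Finset.range (j+2),
          BcJS γ (j+1) r * (lamJS γ r - lamJS γ (j+1)) * (lamJS γ r) ^ n
          = ∑ r ∈ Finset.range (j+1), BcJS γ j r * (lamJS γ r) ^ n := by
        rw [Finset.sum_range_succ]
        simp only [sub_self, mul_zero, zero_mul, add_zero]
        refine Finset.sum_congr rfl fun r hr => ?_
        rw [BcJS_succ hγ hr]
      have eq2 : ∑ r ∈ Finset.range (j+2),
          BcJS γ (j+1) r * (lamJS γ r - lamJS γ (j+1)) * (lamJS γ r) ^ n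
          = (∑ r ∈ Finset.range (j+2), BcJS γ (j+1) r * (lamJS γ r) ^ (n+1))
            - lamJS γ (j+1) * ∑ r ∈ Finset.range (j+2), BcJS γ (j+1) r * (lamJS γ r) ^ n := by
        rw [Finset.mul_sum, ← Finset.sum_sub_distrib]
        refine Finset.sum_congr rfl fun r hr => ?_
        rw [pow_succ]
        ring
      linarith [eq1, eq2]

lemma gamma_prod_range {x : ℝ} (hx : 0 < x) :
    ∀ k : ℕ, ∏ s ∈ Finset.range k, (x + (s:ℝ)) = Real.Gamma (x + k) / Real.Gamma x
  | 0 => by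
    simp [div_self (Real.Gamma_pos_of_pos hx).ne']
  | k + 1 => by
    have hxk : (0:ℝ) < x + k := by positivity
    rw [Finset.prod_range_succ, gamma_prod_range hx k]
    have : x + ((k:ℝ) + 1) = (x + k) + 1 := by ring
    push_cast
    rw [this, Real.Gamma_add_one hxk.ne']
    ring

lemma BcJS_diag_pos {γ : ℝ} (hγ : 0 < γ) (j : ℕ) : 0 < BcJS γ j j := by
  rw [BcJS, Finset.range_add_one, Finset.erase_insert (by simp)]
  refine Finset.prod_pos fun s hs => ?_
  have : lamJS γ s < lamJS γ j := lamJS_strictMono hγ (Finset.mem_range.mp hs)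
  have : 0 < lamJS γ j - lamJS γ s := by linarith
  positivity

lemma BcJS_diag_eq {γ : ℝ} (hγ : 0 < γ) {j : ℕ} (hj : 1 ≤ j) :
    Real.Gamma ((j : ℝ) + 2 * γ - 1) /
      ((Nat.factorial j : ℝ) * Real.Gamma (2 * (j : ℝ) + 2 * γ - 1)) = BcJS γ j j := by
  have hx : (0:ℝ) < (j:ℝ) + 2 * γ - 1 := by
    have : (1:ℝ) ≤ (j:ℝ) := by exact_mod_cast hj
    linarith
  have hprod : ∏ s ∈ Finset.range j, (lamJS γ j - lamJS γ s)
      = (Nat.factorial j : ℝ) * (Real.Gamma (2 * (j:ℝ) + 2 * γ - 1)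
          / Real.Gamma ((j:ℝ) + 2 * γ - 1)) := by
    have hsplit : ∀ s : ℕ, lamJS γ j - lamJS γ s
        = ((j:ℝ) - s) * (((j:ℝ) + 2 * γ - 1) + s) := by
      intro s; simp only [lamJS]; ring
    calc ∏ s ∈ Finset.range j, (lamJS γ j - lamJS γ s)
        = (∏ s ∈ Finset.range j, ((j:ℝ) - s))
          * ∏ s ∈ Finset.range j, (((j:ℝ) + 2 * γ - 1) + s) := by
          rw [← Finset.prod_mul_distrib]
          exact Finset.prod_congr rfl fun s _ => hsplit s
      _ = (Nat.factorial j : ℝ) * (Real.Gamma (2 * (j:ℝ) + 2 * γ - 1)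
            / Real.Gamma ((j:ℝ) + 2 * γ - 1)) := by
          congr 1
          · have : ∏ s ∈ Finset.range j, ((j:ℝ) - s)
                = ((∏ s ∈ Finset.range j, (j - s) : ℕ) : ℝ) := by
              rw [Nat.cast_prod]
              refine Finset.prod_congr rfl fun s hs => ?_
              have : s ≤ j := (Finset.mem_range.mp hs).le
              rw [Nat.cast_sub this]
            rw [this, ← Nat.descFactorial_eq_prod_range, Nat.descFactorial_self]
          · rw [gamma_prod_range hx j]
            congr 2
            ring
  have hG1 : 0 < Real.Gamma ((j:ℝ) + 2 * γ - 1) := Real.Gamma_pos_of_pos hx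
  have hG2 : 0 < Real.Gamma (2 * (j:ℝ) + 2 * γ - 1) := by
    apply Real.Gamma_pos_of_pos
    have : (1:ℝ) ≤ (j:ℝ) := by exact_mod_cast hj
    linarith
  have hfac : (0:ℝ) < (Nat.factorial j : ℝ) := by positivity
  rw [BcJS, Finset.range_add_one, Finset.erase_insert (by simp), Finset.prod_inv_distrib, hprod]
  field_simp

theorem js_asymptotic (j : ℕ) (hj : 1 ≤ j) (γ : ℝ) (hγ : 0 < γ) :
    Filter.Tendsto
      (fun n : ℕ =>
        JS γ n j /
          (Real.Gamma ((j : ℝ) + 2 * γ - 1) /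
              ((Nat.factorial j : ℝ) * Real.Gamma (2 * (j : ℝ) + 2 * γ - 1)) *
            ((j : ℝ) * ((j : ℝ) + 2 * γ - 1)) ^ n))
      Filter.atTop (nhds 1) := by
  have hBpos := BcJS_diag_pos hγ j
  have hBne : BcJS γ j j ≠ 0 := hBpos.ne'
  have hlamj : 0 < lamJS γ j := by
    have := lamJS_strictMono hγ (Nat.lt_of_lt_of_le Nat.zero_lt_one hj)
    simpa [lamJS_zero] using this
  have hfun : ∀ n : ℕ,
      JS γ n j /
        (Real.Gamma ((j : ℝ) + 2 * γ - 1) /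
            ((Nat.factorial j : ℝ) * Real.Gamma (2 * (j : ℝ) + 2 * γ - 1)) *
          ((j : ℝ) * ((j : ℝ) + 2 * γ - 1)) ^ n)
      = ∑ r ∈ Finset.range (j+1),
          (BcJS γ j r / BcJS γ j j) * (lamJS γ r / lamJS γ j) ^ n := by
    intro n
    have hlj : ((j : ℝ) * ((j : ℝ) + 2 * γ - 1)) = lamJS γ j := rfl
    rw [hlj, BcJS_diag_eq hγ hj, JS_closed_form hγ n j, Finset.sum_div]
    refine Finset.sum_congr rfl fun r hr => ?_
    rw [div_pow, div_mul_div_comm]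
  simp only [hfun]
  have hlim : Filter.Tendsto
      (fun n : ℕ => ∑ r ∈ Finset.range (j+1),
        (BcJS γ j r / BcJS γ j j) * (lamJS γ r / lamJS γ j) ^ n)
      Filter.atTop
      (nhds (∑ r ∈ Finset.range (j+1), if r = j then (1:ℝ) else 0)) := by
    refine tendsto_finset_sum _ fun r hr => ?_
    by_cases hrj : r = j
    · subst hrj
      simp only [if_true, div_self hBne, div_self hlamj.ne', one_pow, mul_one]
      exact tendsto_const_nhds
    · have hrlt : r < j := by
        have := Finset.mem_range.mp hr; omega
      have h0 : 0 ≤ lamJS γ r / lamJS γ j :=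
        div_nonneg (lamJS_nonneg hγ r) hlamj.le
      have h1 : lamJS γ r / lamJS γ j < 1 := by
        rw [div_lt_one hlamj]
        exact lamJS_strictMono hγ hrlt
      have := (tendsto_pow_atTop_nhds_zero_of_lt_one h0 h1).const_mul
        (BcJS γ j r / BcJS γ j j)
      simpa [hrj] using this
  have hsum : (∑ r ∈ Finset.range (j+1), if r = j then (1:ℝ) else 0) = 1 := by
    rw [Finset.sum_ite_eq' (Finset.range (j+1)) j (fun _ => (1:ℝ))]
    simp
  rwa [hsum] at hlim
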